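/- Let f be a transcendental entire function, let R > 0 be such that M(r, f) > r for all r ≥ R, and suppose that A_R(f) is a spider's web. Let (L_m)_{m≥0} be the sequence of fundamental loops for A_R(f). Then there exists N ∈ ℕ such that for all n ≥ N and all m ≥ 0, L_{n+m} ∩ L_m = ∅. -/

import Mathlib

open Set Metric Topology Function Bornology

/-- The maximum modulus `M(r, f)` of `f` on the circle `|z| = r`. -/
noncomputable def maxMod (f : ℂ → ℂ) (r : ℝ) : ℝ :=
  sSup ((fun z => ‖f z‖) '' Metric.sphere (0 : ℂ) r)

/-- `f` is a transcendental entire function: holomorphic on all of `ℂ` and not a polynomial. -/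
def TranscEntire (f : ℂ → ℂ) : Prop :=
  Differentiable ℂ f ∧ ¬ ∃ p : Polynomial ℂ, ∀ z, f z = p.eval z

/-- The fast escaping set `A(f)` (with parameter `R`). -/
def fastEscaping (f : ℂ → ℂ) (R : ℝ) : Set ℂ :=
  {z | ∃ L : ℕ, ∀ n : ℕ, (maxMod f)^[n] R ≤ ‖f^[n + L] z‖}

/-- The `L`-th level `A_R^L(f)` of the fast escaping set. -/
def levelSet (f : ℂ → ℂ) (R : ℝ) (L : ℤ) : Set ℂ :=
  {z | ∀ n : ℕ, 0 ≤ (n : ℤ) + L →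
    (maxMod f)^[((n : ℤ) + L).toNat] R ≤ ‖f^[n] z‖}

/-- `E ⊆ ℂ` is an (infinite) spider's web. -/
def SpidersWeb (E : Set ℂ) : Prop :=
  IsConnected E ∧ ∃ G : ℕ → Set ℂ,
    (∀ n, IsOpen (G n) ∧ IsConnected (G n) ∧ Bornology.IsBounded (G n) ∧
      SimplyConnectedSpace (G n) ∧ G n ⊆ G (n + 1) ∧ frontier (G n) ⊆ E) ∧
    (⋃ n, G n) = Set.univ

/-- `K` is a connected component of the set `S`. -/
def IsCompOf {X : Type*} [TopologicalSpace X] (K S : Set X) : Prop :=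
  ∃ z ∈ S, K = connectedComponentIn S z

/-- The `n`-th fundamental hole for `A_R(f)`: the component of the complement of
`A_R^n(f)` containing `0`. -/
noncomputable def fundHole (f : ℂ → ℂ) (R : ℝ) (n : ℤ) : Set ℂ :=
  connectedComponentIn (levelSet f R n)ᶜ 0

/-- The `n`-th fundamental loop for `A_R(f)`. -/
noncomputable def fundLoop (f : ℂ → ℂ) (R : ℝ) (n : ℤ) : Set ℂ :=
  frontier (fundHole f R n)

/-!
The fundamental holes grow at most like the iterated maximum modulus, while every point of
`L_n` has modulus at least `M^n(R)`. Since `A_R(f)` is a spider's web, `H_0` lies inside one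
of the bounded domains `G_k`, so `H_0 ⊆ {|z| ≤ M^k(R)}` for some `k`. The boundary of the open
set `f(H_m)` lies in `f(L_m) ⊆ A_R^{m+1}(f)`, so the connected set `H_{m+1}`, which meets
`f(H_m)` at `f(0)`, is contained in `f(H_m)`; by the maximum modulus principle this gives
`H_m ⊆ {|z| ≤ M^{m+k}(R)}`. Hence `L_m` and `L_{n+m}` are disjoint as soon as `n > k`.
-/

section Topology

variable {X Y : Type*} [TopologicalSpace X] [TopologicalSpace Y]

lemma closure_connectedComponentIn_inter_subset (U : Set X) (x : X) :
    closure (connectedComponentIn U x) ∩ U ⊆ connectedComponentIn U x := by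
  rintro y ⟨hy, hyU⟩
  by_cases hxU : x ∈ U
  · have hpre : IsPreconnected (insert y (connectedComponentIn U x)) :=
      isPreconnected_connectedComponentIn.subset_closure (subset_insert _ _)
        (insert_subset hy subset_closure)
    exact hpre.subset_connectedComponentIn (mem_insert_of_mem _ (mem_connectedComponentIn hxU))
      (insert_subset hyU (connectedComponentIn_subset _ _)) (mem_insert _ _)
  · simp [connectedComponentIn_eq_empty hxU] at hy

lemma frontier_connectedComponentIn_subset_compl [LocallyConnectedSpace X] {U : Set X}
    (hU : IsOpen U) (x : X) : frontier (connectedComponentIn U x) ⊆ Uᶜ := by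
  rw [hU.connectedComponentIn.frontier_eq]
  exact fun y ⟨hy, hyC⟩ hyU => hyC (closure_connectedComponentIn_inter_subset U x ⟨hy, hyU⟩)

lemma IsPreconnected.subset_of_disjoint_frontier {s u : Set X} (hs : IsPreconnected s)
    (hu : IsOpen u) (hsu : (s ∩ u).Nonempty) (hfr : Disjoint s (frontier u)) : s ⊆ u := by
  refine hs.subset_of_closure_inter_subset hu hsu fun y ⟨hyu, hys⟩ => ?_
  by_contra hy
  exact hfr.notMem_of_mem_left hys (by rw [hu.frontier_eq]; exact ⟨hyu, hy⟩)

lemma frontier_image_subset_image_frontier [T2Space Y] {f : X → Y} (hf : Continuous f)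
    {U : Set X} (hU : IsCompact (closure U)) (hfU : IsOpen (f '' U)) :
    frontier (f '' U) ⊆ f '' frontier U := by
  rw [hfU.frontier_eq, ← image_closure_of_isCompact hU hf.continuousOn]
  rintro _ ⟨⟨z, hz, rfl⟩, hzU⟩
  exact ⟨z, ⟨hz, fun hz' => hzU (mem_image_of_mem f (interior_subset hz'))⟩, rfl⟩

end Topology

section MaxModulus

variable {f : ℂ → ℂ} {R : ℝ}

lemma TranscEntire.isOpenMap (hf : TranscEntire f) : IsOpenMap f :=
  (Complex.analyticOnNhd_univ_iff_differentiable.mpr hf.1).is_constant_or_isOpenMap.resolve_left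
    fun ⟨w, hw⟩ => hf.2 ⟨Polynomial.C w, fun z => by simp [hw]⟩

lemma norm_le_maxMod (hf : Differentiable ℂ f) {r : ℝ} (hr : 0 < r) {z : ℂ} (hz : ‖z‖ ≤ r) :
    ‖f z‖ ≤ maxMod f r := by
  refine Complex.norm_le_of_forall_mem_frontier_norm_le isBounded_ball hf.diffContOnCl
    (fun w hw => ?_) (by rwa [closure_ball 0 hr.ne', mem_closedBall_zero_iff])
  rw [frontier_ball 0 hr.ne'] at hw
  exact le_csSup ((isCompact_sphere 0 r).image (continuous_norm.comp hf.continuous)).bddAbove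
    (mem_image_of_mem _ hw)

lemma norm_lt_maxMod (hf : Differentiable ℂ f) (hopen : IsOpenMap f) {r : ℝ} (hr : 0 < r)
    {z : ℂ} (hz : ‖z‖ < r) : ‖f z‖ < maxMod f r := by
  have himage : f '' ball 0 r ⊆ ball 0 (maxMod f r) := by
    rw [← interior_closedBall' (0 : ℂ) (maxMod f r)]
    refine (hopen _ isOpen_ball).subset_interior_iff.mpr ?_
    rintro _ ⟨w, hw, rfl⟩
    exact mem_closedBall_zero_iff.mpr (norm_le_maxMod hf hr (mem_ball_zero_iff.mp hw).le)
  exact mem_ball_zero_iff.mp (himage (mem_image_of_mem f (mem_ball_zero_iff.mpr hz)))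

variable (hM : ∀ r ≥ R, r < maxMod f r)
include hM

lemma le_iterate_maxMod (k : ℕ) : R ≤ (maxMod f)^[k] R := by
  induction k with
  | zero => rfl
  | succ k ih =>
    rw [iterate_succ_apply']
    exact ih.trans (hM _ ih).le

lemma strictMono_iterate_maxMod : StrictMono fun k => (maxMod f)^[k] R :=
  strictMono_nat_of_lt_succ fun k => by
    simpa only [iterate_succ_apply'] using hM _ (le_iterate_maxMod hM k)

lemma exists_le_iterate_maxMod (hf : Differentiable ℂ f) (hR : 0 < R) (C : ℝ) :
    ∃ k, C ≤ (maxMod f)^[k] R := by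
  by_contra! hC
  have hbdd : BddAbove (range fun k => (maxMod f)^[k] R) :=
    ⟨C, forall_mem_range.2 fun k => (hC k).le⟩
  set S := ⨆ k, (maxMod f)^[k] R
  have hRS : R ≤ S := le_ciSup hbdd 0
  -- if the orbit increased to a finite limit `S`, then `f` would map `|z| ≤ S` into itself
  have hball : ball (0 : ℂ) S ⊆ {w | ‖f w‖ ≤ S} := by
    intro w hw
    obtain ⟨k, hk⟩ := exists_lt_of_lt_ciSup (mem_ball_zero_iff.mp hw)
    calc ‖f w‖ ≤ maxMod f ((maxMod f)^[k] R) :=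
          norm_le_maxMod hf (hR.trans_le (le_iterate_maxMod hM k)) hk.le
      _ = (maxMod f)^[k + 1] R := (iterate_succ_apply' _ _ _).symm
      _ ≤ S := le_ciSup hbdd _
  have hclosedBall : closedBall (0 : ℂ) S ⊆ {w | ‖f w‖ ≤ S} := by
    rw [← closure_ball 0 (hR.trans_le hRS).ne']
    exact closure_minimal hball (isClosed_le (continuous_norm.comp hf.continuous) continuous_const)
  have hMS : maxMod f S ≤ S :=
    csSup_le ((NormedSpace.sphere_nonempty.mpr (hR.le.trans hRS)).image _)
      (forall_mem_image.2 fun w hw => hclosedBall (sphere_subset_closedBall hw))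
  exact (hM S hRS).not_ge hMS

end MaxModulus

section FundamentalHoles

variable {f : ℂ → ℂ} {R : ℝ}

lemma mem_levelSet_natCast {z : ℂ} {m : ℕ} :
    z ∈ levelSet f R m ↔ ∀ n : ℕ, (maxMod f)^[n + m] R ≤ ‖f^[n] z‖ := by
  refine forall_congr' fun n => ?_
  rw [show ((n : ℤ) + m).toNat = n + m by omega]
  exact ⟨fun h => h (by omega), fun h _ => h⟩

lemma iterate_maxMod_le_norm_of_mem_levelSet {z : ℂ} {m : ℕ} (hz : z ∈ levelSet f R m) :
    (maxMod f)^[m] R ≤ ‖z‖ := by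
  simpa using mem_levelSet_natCast.mp hz 0

lemma mapsTo_levelSet (m : ℕ) : MapsTo f (levelSet f R m) (levelSet f R (m + 1 : ℕ)) :=
  fun z hz => mem_levelSet_natCast.mpr fun n => by
    simpa only [← iterate_succ_apply, ← add_assoc, add_right_comm n m 1] using
      mem_levelSet_natCast.mp hz (n + 1)

lemma isClosed_levelSet (hf : Continuous f) (L : ℤ) : IsClosed (levelSet f R L) := by
  simp only [levelSet, ofPred_forall]
  exact isClosed_iInter fun n => isClosed_iInter fun _ =>
    isClosed_le continuous_const (hf.iterate n).norm

lemma isOpen_fundHole (hf : Continuous f) (n : ℤ) : IsOpen (fundHole f R n) :=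
  (isClosed_levelSet hf n).isOpen_compl.connectedComponentIn

lemma fundLoop_subset_levelSet (hf : Continuous f) (n : ℤ) : fundLoop f R n ⊆ levelSet f R n := by
  simpa only [fundLoop, fundHole, compl_compl] using
    frontier_connectedComponentIn_subset_compl (isClosed_levelSet hf n).isOpen_compl 0

lemma ball_subset_fundHole {m : ℕ} (hm : 0 < (maxMod f)^[m] R) :
    ball 0 ((maxMod f)^[m] R) ⊆ fundHole f R m :=
  (convex_ball _ _).isPreconnected.subset_connectedComponentIn (mem_ball_self hm)
    fun _ hz hmem => (mem_ball_zero_iff.mp hz).not_ge (iterate_maxMod_le_norm_of_mem_levelSet hmem)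

lemma fundHole_subset_of_frontier_subset {n : ℤ} {W : Set ℂ} (hW : IsOpen W)
    (hfr : frontier W ⊆ levelSet f R n) (hmeet : (fundHole f R n ∩ W).Nonempty) :
    fundHole f R n ⊆ W :=
  isPreconnected_connectedComponentIn.subset_of_disjoint_frontier hW hmeet
    (disjoint_compl_left.mono (connectedComponentIn_subset _ _) hfr)

lemma isBounded_fundHole_zero (hR : 0 < R) (hweb : SpidersWeb (levelSet f R 0)) :
    IsBounded (fundHole f R 0) := by
  obtain ⟨-, G, hG, hGuniv⟩ := hweb
  obtain ⟨k, hk⟩ := mem_iUnion.mp (hGuniv ▸ mem_univ (0 : ℂ))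
  have h0 : (0 : ℂ) ∈ fundHole f R 0 := ball_subset_fundHole (m := 0) hR (mem_ball_self hR)
  exact (hG k).2.2.1.subset
    (fundHole_subset_of_frontier_subset (hG k).1 (hG k).2.2.2.2.2 ⟨0, h0, hk⟩)

variable (hf : Differentiable ℂ f) (hopen : IsOpenMap f) (hR : 0 < R)
  (hM : ∀ r ≥ R, r < maxMod f r)
include hf hopen hR hM

lemma fundHole_succ_subset_image {m : ℕ} (hbdd : IsBounded (fundHole f R m)) :
    fundHole f R (m + 1 : ℕ) ⊆ f '' fundHole f R m := by
  have hpos : 0 < (maxMod f)^[m] R := hR.trans_le (le_iterate_maxMod hM m)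
  have hW : IsOpen (f '' fundHole f R m) := hopen _ (isOpen_fundHole hf.continuous m)
  have hf0 : ‖f 0‖ < (maxMod f)^[m + 1] R := by
    rw [iterate_succ_apply']
    exact norm_lt_maxMod hf hopen hpos (by simpa using hpos)
  refine fundHole_subset_of_frontier_subset hW ?_
    ⟨f 0, ball_subset_fundHole ((norm_nonneg _).trans_lt hf0) (mem_ball_zero_iff.mpr hf0),
      0, ball_subset_fundHole hpos (mem_ball_self hpos), rfl⟩
  calc frontier (f '' fundHole f R m)
      ⊆ f '' fundLoop f R m :=
        frontier_image_subset_image_frontier hf.continuous hbdd.isCompact_closure hW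
    _ ⊆ f '' levelSet f R m := image_mono (fundLoop_subset_levelSet hf.continuous m)
    _ ⊆ levelSet f R (m + 1 : ℕ) := (mapsTo_levelSet m).image_subset

lemma fundHole_subset_closedBall {k : ℕ} (hk : fundHole f R 0 ⊆ closedBall 0 ((maxMod f)^[k] R))
    (m : ℕ) : fundHole f R m ⊆ closedBall 0 ((maxMod f)^[m + k] R) := by
  induction m with
  | zero => simpa using hk
  | succ m ih =>
    have hpos : 0 < (maxMod f)^[m + k] R := hR.trans_le (le_iterate_maxMod hM _)
    refine (fundHole_succ_subset_image hf hopen hR hM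
      (isBounded_closedBall.subset ih)).trans ?_
    rintro _ ⟨z, hz, rfl⟩
    rw [mem_closedBall_zero_iff, add_right_comm, iterate_succ_apply']
    exact norm_le_maxMod hf hpos (mem_closedBall_zero_iff.mp (ih hz))

end FundamentalHoles

/-- eventually the fundamental loops are pairwise disjoint at distance `N`. -/
theorem stmt_18 (f : ℂ → ℂ) (R : ℝ) (hf : TranscEntire f) (hR : 0 < R)
    (hM : ∀ r ≥ R, r < maxMod f r) (hweb : SpidersWeb (levelSet f R 0)) :
    ∃ N : ℕ, ∀ n : ℕ, N ≤ n → ∀ m : ℕ,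
      fundLoop f R (↑n + ↑m) ∩ fundLoop f R m = ∅ := by
  obtain ⟨ρ, hρ⟩ := (isBounded_fundHole_zero hR hweb).subset_closedBall 0
  obtain ⟨k, hk⟩ := exists_le_iterate_maxMod hM hf.1 hR ρ
  have hholes := fundHole_subset_closedBall hf.1 hf.isOpenMap hR hM
    (hρ.trans (closedBall_subset_closedBall hk))
  refine ⟨k + 1, fun n hn m => eq_empty_iff_forall_notMem.2 fun z ⟨hz₁, hz₂⟩ => ?_⟩
  rw [← Nat.cast_add] at hz₁
  have hlow : (maxMod f)^[n + m] R ≤ ‖z‖ := iterate_maxMod_le_norm_of_mem_levelSet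
    (fundLoop_subset_levelSet hf.1.continuous _ hz₁)
  have hup : ‖z‖ ≤ (maxMod f)^[m + k] R := mem_closedBall_zero_iff.mp
    (closure_minimal (hholes m) isClosed_closedBall (frontier_subset_closure hz₂))
  exact (strictMono_iterate_maxMod hM (by omega : m + k < n + m)).not_ge (hlow.trans hup)
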